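/- arXiv:1609.09674 — 2 statements merged into one kernel-verified Lean document; each statement's English description precedes it below -/
import Mathlib

section
/- Let 0 < l < ℓ < r, α ∈ (0,1), λ > 0, Π* and Π₃ as follows: Π* = ((1-α)/(2α) - 1/(2λ))ℓ²·ln(r/ℓ) + (ℓ²-l²)/4 + (r²-ℓ²)/(4λ), Π₃ = (ln(ℓ/l))/(1-α) + (ln(r/ℓ))/α. Define v(x) = (2Π*/((1-α)Π₃))ln(x/l) - (x²-l²)/2 on (l,ℓ] and v(x) = (2Π*/((1-α)Π₃))ln(ℓ/l) - (ℓ²-l²)/2 + (2Π*/(αΠ₃) + ℓ²/λ - ((1-α)/α)ℓ²)·ln(x/ℓ) - (x²-ℓ²)/(2λ) on (ℓ,r). Then v(r) = 0, v is continuous at ℓ, (λ/2)(v'' + v'/x) = -1 on (ℓ,r), and (1-α)v'(ℓ⁻) = α·v'(ℓ⁺). -/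
/-!
On each side of `ℓ`, `v` is a radial solution `a + b log (x / c) - (x² - c²) / (2k)` of
`(k/2)(u'' + u'/x) = -1` (`k = 1` inside, `k = λ` outside), the outer piece starting at `ℓ` from
the value of the inner one; this gives the equation and continuity. The coefficient of
`log (x / ℓ)` is exactly what matches the weighted fluxes, and since
`log (ℓ/l)/(1-α) + log (r/ℓ)/α = Π₃`, the value at `r` reduces to `2Π*` minus the explicit terms
defining `Π*`.
-/

open Set Filter Topology

noncomputable def radialProfile (a b c k x : ℝ) : ℝ :=
  a + b * Real.log (x / c) - (x ^ 2 - c ^ 2) / (2 * k)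

section RadialProfile

variable {a b c k x : ℝ}

theorem radialProfile_self (hc : c ≠ 0) : radialProfile a b c k c = a := by
  simp [radialProfile, div_self hc]

theorem hasDerivAt_radialProfile (hc : c ≠ 0) (hx : x ≠ 0) :
    HasDerivAt (radialProfile a b c k) (b / x - x / k) x := by
  have hlog : HasDerivAt (fun y => Real.log (y / c)) (1 / c / (x / c)) x :=
    ((hasDerivAt_id x).div_const c).log (div_ne_zero hx hc)
  refine (((hlog.const_mul b).const_add a).fun_sub
    (((hasDerivAt_pow 2 x).sub_const (c ^ 2)).div_const (2 * k))).congr_deriv ?_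
  field_simp
  ring

theorem deriv_radialProfile (hc : c ≠ 0) :
    EqOn (deriv (radialProfile a b c k)) (fun y => b / y - y / k) {0}ᶜ :=
  fun _ hy => (hasDerivAt_radialProfile hc hy).deriv

theorem radialProfile_generator_eq_neg_one (hc : c ≠ 0) (hk : k ≠ 0) (hx : x ≠ 0) :
    k / 2 * (deriv (deriv (radialProfile a b c k)) x + deriv (radialProfile a b c k) x / x)
      = -1 := by
  have hderiv₂ : HasDerivAt (fun y => b / y - y / k) (b * -(x ^ 2)⁻¹ - 1 / k) x := by
    simpa [div_eq_mul_inv] using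
      ((hasDerivAt_inv hx).const_mul b).fun_sub ((hasDerivAt_id x).div_const k)
  have hev : deriv (radialProfile a b c k) =ᶠ[𝓝 x] fun y => b / y - y / k :=
    (deriv_radialProfile hc).eventuallyEq_of_mem (isOpen_compl_singleton.mem_nhds hx)
  rw [hev.deriv_eq, hderiv₂.deriv, deriv_radialProfile hc hx]
  field_simp
  ring

end RadialProfile

section Gluing

variable {f g : ℝ → ℝ} {a : ℝ}

theorem continuousAt_ite_le (hf : ContinuousAt f a) (hg : ContinuousAt g a) (h : f a = g a) :
    ContinuousAt (fun x => if x ≤ a then f x else g x) a := by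
  refine continuousAt_iff_continuous_left_right.2 ⟨?_, ?_⟩
  · exact hf.continuousWithinAt.congr (fun y hy => if_pos hy) (if_pos le_rfl)
  · refine hg.continuousWithinAt.congr (fun y hy => ?_) (by simp [h])
    rcases (mem_Ici.1 hy).eq_or_lt with rfl | hlt
    · simp [h]
    · exact if_neg hlt.not_ge

theorem ite_le_eventuallyEq_of_lt {x : ℝ} (hx : a < x) :
    (fun y => if y ≤ a then f y else g y) =ᶠ[𝓝 x] g :=
  eventually_of_mem (isOpen_Ioi.mem_nhds hx) fun _ hy => if_neg (not_le.2 hy)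

theorem derivWithin_Iio_ite_le {f' : ℝ} (hf : HasDerivAt f f' a) :
    derivWithin (fun x => if x ≤ a then f x else g x) (Iio a) a = f' :=
  (hf.hasDerivWithinAt.congr (f₁ := fun x => if x ≤ a then f x else g x)
    (fun _ hy => if_pos (le_of_lt hy)) (if_pos le_rfl)).derivWithin
    (uniqueDiffWithinAt_Iio a)

theorem derivWithin_Ioi_ite_le {g' : ℝ} (hg : HasDerivAt g g' a) (h : f a = g a) :
    derivWithin (fun x => if x ≤ a then f x else g x) (Ioi a) a = g' :=
  (hg.hasDerivWithinAt.congr (f₁ := fun x => if x ≤ a then f x else g x)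
    (fun _ hy => if_neg (not_le.2 hy)) (by simp [h])).derivWithin
    (uniqueDiffWithinAt_Ioi a)

end Gluing

theorem stmt_9 (l ell r α lam : ℝ) (hl : 0 < l) (hle : l < ell) (her : ell < r)
    (hα : α ∈ Set.Ioo (0:ℝ) 1) (hlam : 0 < lam)
    (Ps P₃ : ℝ)
    (hPs : Ps = ((1 - α) / (2 * α) - 1 / (2 * lam)) * ell^2 * Real.log (r / ell)
        + (ell^2 - l^2) / 4 + (r^2 - ell^2) / (4 * lam))
    (hP₃ : P₃ = Real.log (ell / l) / (1 - α) + Real.log (r / ell) / α)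
    (v : ℝ → ℝ)
    (hv : ∀ x, v x = if x ≤ ell then
        (2 * Ps / ((1 - α) * P₃)) * Real.log (x / l) - (x^2 - l^2) / 2
      else
        (2 * Ps / ((1 - α) * P₃)) * Real.log (ell / l) - (ell^2 - l^2) / 2
          + (2 * Ps / (α * P₃) + ell^2 / lam - ((1 - α) / α) * ell^2) * Real.log (x / ell)
          - (x^2 - ell^2) / (2 * lam)) :
    v r = 0 ∧ ContinuousAt v ell ∧
    (∀ x ∈ Set.Ioo ell r, (lam / 2) * (deriv (deriv v) x + deriv v x / x) = -1) ∧
    (1 - α) * derivWithin v (Set.Iio ell) ell = α * derivWithin v (Set.Ioi ell) ell := by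
  obtain ⟨hα0, hα1⟩ := hα
  have hell : 0 < ell := hl.trans hle
  have hP₃pos : 0 < P₃ := hP₃ ▸ add_pos
    (div_pos (Real.log_pos ((one_lt_div hl).2 hle)) (sub_pos.2 hα1))
    (div_pos (Real.log_pos ((one_lt_div hell).2 her)) hα0)
  set A := 2 * Ps / ((1 - α) * P₃)
  set B := 2 * Ps / (α * P₃) + ell ^ 2 / lam - (1 - α) / α * ell ^ 2
  set vInner := radialProfile 0 A l 1
  set vOuter := radialProfile (vInner ell) B ell lam
  have hv' : v = fun x => if x ≤ ell then vInner x else vOuter x := funext fun x => by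
    rw [hv]; split_ifs <;> simp [vInner, vOuter, radialProfile]
  have hglue : vInner ell = vOuter ell := (radialProfile_self hell.ne').symm
  subst hv'
  refine ⟨?_, ?_, fun x hx => ?_, ?_⟩
  · have hlogs : A * Real.log (ell / l) + 2 * Ps / (α * P₃) * Real.log (r / ell) = 2 * Ps :=
      calc _ = 2 * Ps / P₃ * (Real.log (ell / l) / (1 - α) + Real.log (r / ell) / α) := by
            simp only [A]; field_simp [(sub_pos.2 hα1).ne']
        _ = 2 * Ps := by rw [← hP₃, div_mul_cancel₀ _ hP₃pos.ne']
    simp only [if_neg her.not_ge, vOuter, vInner, B, radialProfile]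
    linear_combination hlogs + 2 * hPs
  · exact continuousAt_ite_le (hasDerivAt_radialProfile hl.ne' hell.ne').continuousAt
      (hasDerivAt_radialProfile hell.ne' hell.ne').continuousAt hglue
  · have hev := ite_le_eventuallyEq_of_lt (f := vInner) (g := vOuter) hx.1
    rw [hev.deriv.deriv_eq, hev.deriv_eq]
    exact radialProfile_generator_eq_neg_one hell.ne' hlam.ne' (hell.trans hx.1).ne'
  · rw [derivWithin_Iio_ite_le (hasDerivAt_radialProfile hl.ne' hell.ne'),
      derivWithin_Ioi_ite_le (hasDerivAt_radialProfile hell.ne' hell.ne') hglue]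
    simp only [A, B]
    field_simp
    ring
end

section
/- Let 0 < l < ℓ be fixed and let ε > 0, with r = ℓ + ε, and families α = α(ε) ∈ (0,1), λ = λ(ε) > 0 such that α(ε) → 0 and α(ε)ε/λ(ε) → 0 as ε → 0. Define C(ε) = 2Π*(ℓ+ε)/((1-α)Π₃(ℓ+ε)) with Π*(r) = ((1-α)/(2α) - 1/(2λ))ℓ² ln(r/ℓ) + (ℓ²-l²)/4 + (r²-ℓ²)/(4λ) and Π₃(r) = ln(ℓ/l)/(1-α) + ln(r/ℓ)/α. Then as ε → 0: (i) if α/ε → G ∈ (0,∞), C(ε) → (ℓ/G + (ℓ²-l²)/2)/(1/(ℓG) + ln(ℓ/l)); (ii) if α/ε → 0, C(ε) → ℓ²; (iii) if α/ε → ∞, C(ε) → (ℓ²-l²)/(2 ln(ℓ/l)). -/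
/-!
Multiply numerator and denominator of `C = 2Π*/((1-α)Π₃)` by the weight `s = α/(α + ln(r/ℓ))`.
Since `s · ln(r/ℓ)/α = 1 - s`, this gives
`C = ((1-α)ℓ²(1-s) + (ℓ²-l²)s/2 + R s) / (ln(ℓ/l) s + (1-α)(1-s))`,
where `R = (2ℓ²(ε/ℓ - ln(r/ℓ)) + ε²)/(2λ)` collects the `λ`-terms. As `0 ≤ ε/ℓ - ln(r/ℓ) ≤ (ε/ℓ)²`
and `s ≤ α(ℓ+ε)/ε`, we get `0 ≤ R s ≤ (3/2)(αε/λ)(ℓ+ε) → 0`, so `C` tends to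
`(ℓ²(1-s₀) + (ℓ²-l²)s₀/2) / (ln(ℓ/l)s₀ + 1 - s₀)` whenever `s → s₀ ∈ [0,1]`. Finally
`s = (α/ε)/(α/ε + ln(r/ℓ)/ε)` and `ln(r/ℓ)/ε → 1/ℓ`, so `s₀` is `ℓG/(ℓG+1)`, `0` or `1`
in the three regimes.
-/

open Filter Topology Real Set

namespace CollapsingShell

lemma tendsto_log_add_div_div {ℓ : ℝ} (hℓ : 0 < ℓ) :
    Tendsto (fun ε => log ((ℓ + ε) / ℓ) / ε) (𝓝[>] 0) (𝓝 ℓ⁻¹) := by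
  refine ((hasDerivAt_log hℓ.ne').tendsto_slope_zero_right).congr' ?_
  filter_upwards [self_mem_nhdsWithin] with ε (hε : 0 < ε)
  rw [log_div (by positivity) hℓ.ne', smul_eq_mul, div_eq_inv_mul]

lemma log_add_div_pos {ℓ ε : ℝ} (hℓ : 0 < ℓ) (hε : 0 < ε) : 0 < log ((ℓ + ε) / ℓ) :=
  log_pos ((one_lt_div hℓ).2 (by linarith))

lemma div_add_le_log_add_div {ℓ ε : ℝ} (hℓ : 0 < ℓ) (hε : 0 < ε) :
    ε / (ℓ + ε) ≤ log ((ℓ + ε) / ℓ) := by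
  have := one_sub_inv_le_log_of_pos (show 0 < (ℓ + ε) / ℓ by positivity)
  rwa [inv_div, one_sub_div (by positivity), add_sub_cancel_left] at this

lemma log_add_div_le {ℓ ε : ℝ} (hℓ : 0 < ℓ) (hε : 0 < ε) :
    log ((ℓ + ε) / ℓ) ≤ ε / ℓ := by
  have := log_le_sub_one_of_pos (show 0 < (ℓ + ε) / ℓ by positivity)
  rwa [div_sub_one hℓ.ne', add_sub_cancel_left] at this

lemma div_sub_log_add_div_le {ℓ ε : ℝ} (hℓ : 0 < ℓ) (hε : 0 < ε) :
    ε / ℓ - log ((ℓ + ε) / ℓ) ≤ (ε / ℓ) ^ 2 := by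
  have hlog := div_add_le_log_add_div hℓ hε
  have : ε / ℓ - ε / (ℓ + ε) ≤ (ε / ℓ) ^ 2 := by
    rw [div_sub_div _ _ hℓ.ne' (by positivity), div_pow,
      div_le_div_iff₀ (by positivity) (by positivity)]
    nlinarith [mul_pos hε hℓ, mul_pos (mul_pos hε hε) hε]
  linarith

noncomputable def shellWeight (ℓ a ε : ℝ) : ℝ := a / (a + log ((ℓ + ε) / ℓ))

noncomputable def shellRemainder (ℓ lam ε : ℝ) : ℝ :=
  (2 * ℓ ^ 2 * (ε / ℓ - log ((ℓ + ε) / ℓ)) + ε ^ 2) / (2 * lam)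

lemma shellWeight_pos {ℓ a ε : ℝ} (hℓ : 0 < ℓ) (hε : 0 < ε) (ha : 0 < a) :
    0 < shellWeight ℓ a ε := by
  have := log_add_div_pos hℓ hε
  unfold shellWeight
  positivity

lemma shellWeight_le {ℓ a ε : ℝ} (hℓ : 0 < ℓ) (hε : 0 < ε) (ha : 0 < a) :
    shellWeight ℓ a ε ≤ a * (ℓ + ε) / ε := by
  have hlog := div_add_le_log_add_div hℓ hε
  calc shellWeight ℓ a ε ≤ a / (ε / (ℓ + ε)) := by unfold shellWeight; gcongr; linarith
    _ = a * (ℓ + ε) / ε := by rw [div_div_eq_mul_div]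

lemma shellRemainder_nonneg {ℓ lam ε : ℝ} (hℓ : 0 < ℓ) (hε : 0 < ε) (hlam : 0 < lam) :
    0 ≤ shellRemainder ℓ lam ε := by
  have : 0 ≤ ε / ℓ - log ((ℓ + ε) / ℓ) := sub_nonneg.2 (log_add_div_le hℓ hε)
  unfold shellRemainder
  positivity

lemma shellRemainder_le {ℓ lam ε : ℝ} (hℓ : 0 < ℓ) (hε : 0 < ε) (hlam : 0 < lam) :
    shellRemainder ℓ lam ε ≤ 3 * ε ^ 2 / (2 * lam) := by
  have hlog := div_sub_log_add_div_le hℓ hε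
  have : ℓ ^ 2 * (ε / ℓ) ^ 2 = ε ^ 2 := by field_simp
  unfold shellRemainder
  gcongr
  nlinarith

lemma meanExitCoeff_eq_weighted {l ℓ a lam ε : ℝ} (hℓ : 0 < ℓ) (hε : 0 < ε)
    (ha : a ∈ Ioo (0:ℝ) 1) (hlam : lam ≠ 0) :
    2 * (((1 - a) / (2 * a) - 1 / (2 * lam)) * ℓ ^ 2 * log ((ℓ + ε) / ℓ) + (ℓ ^ 2 - l ^ 2) / 4
        + ((ℓ + ε) ^ 2 - ℓ ^ 2) / (4 * lam)) /
      ((1 - a) * (log (ℓ / l) / (1 - a) + log ((ℓ + ε) / ℓ) / a)) =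
    ((1 - a) * ℓ ^ 2 * (1 - shellWeight ℓ a ε) + (ℓ ^ 2 - l ^ 2) / 2 * shellWeight ℓ a ε
        + shellRemainder ℓ lam ε * shellWeight ℓ a ε) /
      (log (ℓ / l) * shellWeight ℓ a ε + (1 - a) * (1 - shellWeight ℓ a ε)) := by
  obtain ⟨ha0, ha1⟩ := ha
  have hlog := log_add_div_pos hℓ hε
  have h1a : 1 - a ≠ 0 := by linarith
  unfold shellWeight shellRemainder
  field_simp
  ring

lemma tendsto_weighted_ratio {ι : Type*} {f : Filter ι} {α s r : ι → ℝ} {A B c s₀ : ℝ}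
    (hA : 0 < A) (hs₀ : s₀ ∈ Icc (0:ℝ) 1) (hα : Tendsto α f (𝓝 0)) (hs : Tendsto s f (𝓝 s₀))
    (hr : Tendsto r f (𝓝 0)) :
    Tendsto (fun i => ((1 - α i) * B * (1 - s i) + c * s i + r i) /
        (A * s i + (1 - α i) * (1 - s i))) f
      (𝓝 ((B * (1 - s₀) + c * s₀) / (A * s₀ + (1 - s₀)))) := by
  have hden : A * s₀ + (1 - s₀) ≠ 0 := by
    obtain ⟨h0, h1⟩ := hs₀
    rcases h1.lt_or_eq with h1 | rfl
    · nlinarith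
    · simpa using hA.ne'
  have hα' : Tendsto (fun i => 1 - α i) f (𝓝 1) := by simpa using tendsto_const_nhds.sub hα
  have hs' : Tendsto (fun i => 1 - s i) f (𝓝 (1 - s₀)) := tendsto_const_nhds.sub hs
  have hnum := ((hα'.mul (tendsto_const_nhds (x := B))).mul hs').add
    ((tendsto_const_nhds (x := c)).mul hs) |>.add hr
  have hden' := ((tendsto_const_nhds (x := A)).mul hs).add (hα'.mul hs')
  simp only [one_mul, add_zero] at hnum hden'
  exact hnum.div hden' hden

lemma tendsto_shellRemainder_mul_shellWeight {ℓ : ℝ} (hℓ : 0 < ℓ) {α lam : ℝ → ℝ}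
    (hα : ∀ ε > (0:ℝ), 0 < α ε) (hlam : ∀ ε > (0:ℝ), 0 < lam ε)
    (hmain : Tendsto (fun ε => α ε * ε / lam ε) (𝓝[>] 0) (𝓝 0)) :
    Tendsto (fun ε => shellRemainder ℓ (lam ε) ε * shellWeight ℓ (α ε) ε) (𝓝[>] 0) (𝓝 0) := by
  have hr : Tendsto (fun ε : ℝ => ℓ + ε) (𝓝[>] 0) (𝓝 (ℓ + 0)) :=
    tendsto_const_nhds.add (tendsto_nhdsWithin_of_tendsto_nhds tendsto_id)
  have hbound : Tendsto (fun ε => 3 / 2 * (α ε * ε / lam ε) * (ℓ + ε)) (𝓝[>] 0) (𝓝 0) := by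
    simpa using (tendsto_const_nhds.mul hmain).mul hr
  refine squeeze_zero' ?_ ?_ hbound <;>
    filter_upwards [self_mem_nhdsWithin] with ε (hε : 0 < ε)
  · exact mul_nonneg (shellRemainder_nonneg hℓ hε (hlam ε hε)) (shellWeight_pos hℓ hε (hα ε hε)).le
  · calc shellRemainder ℓ (lam ε) ε * shellWeight ℓ (α ε) ε
        ≤ 3 * ε ^ 2 / (2 * lam ε) * (α ε * (ℓ + ε) / ε) :=
          mul_le_mul (shellRemainder_le hℓ hε (hlam ε hε)) (shellWeight_le hℓ hε (hα ε hε))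
            (shellWeight_pos hℓ hε (hα ε hε)).le (by have := hlam ε hε; positivity)
      _ = 3 / 2 * (α ε * ε / lam ε) * (ℓ + ε) := by
          field_simp [(hlam ε hε).ne']

lemma tendsto_shellWeight_of_tendsto {ℓ G : ℝ} {α : ℝ → ℝ} (hℓ : 0 < ℓ) (hG : 0 ≤ G)
    (hp : Tendsto (fun ε => α ε / ε) (𝓝[>] 0) (𝓝 G)) :
    Tendsto (fun ε => shellWeight ℓ (α ε) ε) (𝓝[>] 0) (𝓝 (G / (G + ℓ⁻¹))) := by
  refine (hp.div (hp.add (tendsto_log_add_div_div hℓ)) (by positivity)).congr' ?_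
  filter_upwards [self_mem_nhdsWithin] with ε (hε : 0 < ε)
  simp only [Pi.div_apply, shellWeight]
  rw [← add_div, div_div_div_cancel_right₀ hε.ne']

lemma tendsto_shellWeight_of_tendsto_atTop {ℓ : ℝ} {α : ℝ → ℝ} (hℓ : 0 < ℓ)
    (hp : Tendsto (fun ε => α ε / ε) (𝓝[>] 0) atTop) :
    Tendsto (fun ε => shellWeight ℓ (α ε) ε) (𝓝[>] 0) (𝓝 1) := by
  have hden := (tendsto_const_nhds (x := (1:ℝ))).add
    ((tendsto_log_add_div_div hℓ).mul hp.inv_tendsto_atTop)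
  rw [mul_zero, add_zero] at hden
  have hinv := hden.inv₀ one_ne_zero
  rw [inv_one] at hinv
  refine hinv.congr' ?_
  filter_upwards [self_mem_nhdsWithin, hp.eventually_gt_atTop 0] with ε (hε : 0 < ε) hpos
  have ha : α ε ≠ 0 := by rintro h; simp [h] at hpos
  simp only [Pi.inv_apply, shellWeight]
  field_simp

theorem tendsto_meanExitCoeff_of_tendsto_shellWeight {l ℓ : ℝ} (hl : 0 < l) (hle : l < ℓ)
    {α lam C : ℝ → ℝ} (hα : ∀ ε > (0:ℝ), α ε ∈ Ioo (0:ℝ) 1) (hlam : ∀ ε > (0:ℝ), 0 < lam ε)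
    (hα0 : Tendsto α (𝓝[>] 0) (𝓝 0))
    (hmain : Tendsto (fun ε => α ε * ε / lam ε) (𝓝[>] 0) (𝓝 0))
    (hC : ∀ ε > (0:ℝ), C ε =
      2 * (((1 - α ε) / (2 * α ε) - 1 / (2 * lam ε)) * ℓ ^ 2 * log ((ℓ + ε) / ℓ)
        + (ℓ ^ 2 - l ^ 2) / 4 + ((ℓ + ε) ^ 2 - ℓ ^ 2) / (4 * lam ε)) /
      ((1 - α ε) * (log (ℓ / l) / (1 - α ε) + log ((ℓ + ε) / ℓ) / α ε)))
    {s₀ : ℝ} (hs₀ : s₀ ∈ Icc (0:ℝ) 1)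
    (hs : Tendsto (fun ε => shellWeight ℓ (α ε) ε) (𝓝[>] 0) (𝓝 s₀)) :
    Tendsto C (𝓝[>] 0)
      (𝓝 ((ℓ ^ 2 * (1 - s₀) + (ℓ ^ 2 - l ^ 2) / 2 * s₀) / (log (ℓ / l) * s₀ + (1 - s₀)))) := by
  have hℓ : 0 < ℓ := hl.trans hle
  have hlog : 0 < log (ℓ / l) := log_pos ((one_lt_div hl).2 hle)
  refine (tendsto_weighted_ratio hlog hs₀ hα0 hs
    (tendsto_shellRemainder_mul_shellWeight hℓ (fun ε hε => (hα ε hε).1) hlam hmain)).congr' ?_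
  filter_upwards [self_mem_nhdsWithin] with ε (hε : 0 < ε)
  rw [hC ε hε, meanExitCoeff_eq_weighted hℓ hε (hα ε hε) (hlam ε hε).ne']

end CollapsingShell

open CollapsingShell

theorem stmt_10 (l ell : ℝ) (hl : 0 < l) (hle : l < ell)
    (α lam : ℝ → ℝ)
    (hα : ∀ ε > (0:ℝ), α ε ∈ Set.Ioo (0:ℝ) 1)
    (hlam : ∀ ε > (0:ℝ), 0 < lam ε)
    (hα0 : Tendsto α (𝓝[>] 0) (𝓝 0))
    (hmain : Tendsto (fun ε => α ε * ε / lam ε) (𝓝[>] 0) (𝓝 0))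
    (Ps P₃ C : ℝ → ℝ)
    (hPs : ∀ ε, Ps ε = ((1 - α ε) / (2 * α ε) - 1 / (2 * lam ε)) * ell^2
        * Real.log ((ell + ε) / ell) + (ell^2 - l^2) / 4
        + ((ell + ε)^2 - ell^2) / (4 * lam ε))
    (hP₃ : ∀ ε, P₃ ε = Real.log (ell / l) / (1 - α ε) + Real.log ((ell + ε) / ell) / α ε)
    (hC : ∀ ε, C ε = 2 * Ps ε / ((1 - α ε) * P₃ ε)) :
    (∀ G : ℝ, 0 < G → Tendsto (fun ε => α ε / ε) (𝓝[>] 0) (𝓝 G) →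
      Tendsto C (𝓝[>] 0)
        (𝓝 ((ell / G + (ell^2 - l^2) / 2) / (1 / (ell * G) + Real.log (ell / l))))) ∧
    (Tendsto (fun ε => α ε / ε) (𝓝[>] 0) (𝓝 0) →
      Tendsto C (𝓝[>] 0) (𝓝 (ell^2))) ∧
    (Tendsto (fun ε => α ε / ε) (𝓝[>] 0) atTop →
      Tendsto C (𝓝[>] 0) (𝓝 ((ell^2 - l^2) / (2 * Real.log (ell / l))))) := by
  have hell : 0 < ell := hl.trans hle
  have hlim (s₀ : ℝ) := tendsto_meanExitCoeff_of_tendsto_shellWeight (s₀ := s₀) (C := C)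
    hl hle hα hlam hα0 hmain (fun ε _ => by rw [hC, hPs, hP₃])
  have hIcc (G : ℝ) (hG : 0 ≤ G) : G / (G + ell⁻¹) ∈ Icc (0:ℝ) 1 :=
    ⟨by positivity, div_le_one_of_le₀ (le_add_of_nonneg_right (by positivity)) (by positivity)⟩
  refine ⟨fun G hG hp => ?_, fun hp => ?_, fun hp => ?_⟩
  · convert hlim _ (hIcc G hG.le) (tendsto_shellWeight_of_tendsto hell hG.le hp) using 2
    rw [one_sub_div (by positivity), add_sub_cancel_left]
    field_simp
    ring
  · convert hlim _ (hIcc 0 le_rfl) (tendsto_shellWeight_of_tendsto hell le_rfl hp) using 2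
    simp
  · convert hlim 1 ⟨zero_le_one, le_rfl⟩ (tendsto_shellWeight_of_tendsto_atTop hell hp) using 2
    rw [sub_self, mul_zero, add_zero, mul_one]
    field_simp
    ring
end
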